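/- Let F be a free group on a finite set S with the standard word-length metric L (each generator has length 1). Define ψ(x) = [x] for x ∈ S and ψ(x) = −x[x⁻¹] for x⁻¹ ∈ S, and define the ℚ-linear map s₀ : ℚ[F] → ℚ[F][S] on basis elements by s₀(g) = Σ_{j=1}^n x₁⋯x_{j−1} ψ(x_j), where g = x₁⋯x_n is the reduced word for g. Then |s₀(g)| ≤ (1 + 2L(g))², where ℚ[F] carries the norm with |g| = 1 + L(g) and ℚ[F][S] carries the norm with |g[s]| = 1 + L(g) + 1. -/

import Mathlib

/-!
Write `|·|₁` for the unweighted ℓ¹-norm. Left translation by `h` preserves `|·|₁` and raises the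
weighted norm by at most `L(h) |·|₁`, because `L(h g) ≤ L(h) + L(g)`. Since
`s₀(x₁ ⋯ xₙ) = ψ(x₁) + x₁ s₀(x₂ ⋯ xₙ)`, `|ψ(x)|₁ = 1` and `|ψ(x)| ≤ 3`, induction on `n` gives
`|s₀|₁ ≤ n` and `|s₀| ≤ 3 + (n - 1)(n + 1) + (n - 1) ≤ n (n + 2) ≤ (1 + 2n)²`.
-/

namespace PBoundedContraction

variable {S : Type*} [DecidableEq S]

/-- `ψ(x) = [x]` for `x ∈ S` and `ψ(x) = -x[x⁻¹]` for `x⁻¹ ∈ S`, as an element of the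
free module `ℚ[F][S]`, modelled as `(F × S) →₀ ℚ` (a letter is a pair `(x, b)` with
`b = true` meaning the generator `x` and `b = false` meaning `x⁻¹`). -/
noncomputable def psi (ℓ : S × Bool) : (FreeGroup S × S) →₀ ℚ :=
  if ℓ.2 then Finsupp.single (1, ℓ.1) 1
  else Finsupp.single ((FreeGroup.of ℓ.1)⁻¹, ℓ.1) (-1)

/-- Left translation of `ℚ[F][S]` by a group element. -/
noncomputable def transl (h : FreeGroup S) (m : (FreeGroup S × S) →₀ ℚ) :
    (FreeGroup S × S) →₀ ℚ :=
  Finsupp.mapDomain (fun p => (h * p.1, p.2)) m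

/-- `s₀` on a reduced word `x₁ ⋯ x_n`: `Σ_j x₁ ⋯ x_{j-1} ψ(x_j)`, defined by recursion. -/
noncomputable def s0aux : List (S × Bool) → (FreeGroup S × S) →₀ ℚ
  | [] => 0
  | ℓ :: rest => psi ℓ + transl (FreeGroup.mk [ℓ]) (s0aux rest)

/-- The contraction `s₀ : ℚ[F] → ℚ[F][S]`, `s₀(g) = Σ_j x₁ ⋯ x_{j-1} ψ(x_j)` where
`x₁ ⋯ x_n` is the reduced word representing `g`. -/
noncomputable def s0 (g : FreeGroup S) : (FreeGroup S × S) →₀ ℚ :=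
  s0aux (FreeGroup.toWord g)

/-- The standard word length on a free group (all generators have weight 1). -/
def stdLen (g : FreeGroup S) : ℕ := (FreeGroup.toWord g).length

/-- The weighted ℓ¹-norm on `ℚ[F][S]` with weights `|g[s]| = 1 + L(g) + 1`. -/
noncomputable def pNormFS (a : (FreeGroup S × S) →₀ ℚ) : ℝ :=
  a.sum fun x c => |(c : ℝ)| * (1 + (stdLen x.1 : ℝ) + 1)

noncomputable def weightedNorm {α : Type*} (w : α → ℝ) (a : α →₀ ℚ) : ℝ :=
  a.sum fun x c => |(c : ℝ)| * w x

section WeightedNorm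

variable {α β : Type*} {w w' : α → ℝ}

theorem weightedNorm_eq_sum_of_support_subset (w : α → ℝ) {a : α →₀ ℚ} {t : Finset α}
    (h : a.support ⊆ t) : weightedNorm w a = ∑ x ∈ t, |(a x : ℝ)| * w x :=
  Finsupp.sum_of_support_subset a h _ fun _ _ => by simp

theorem weightedNorm_nonneg (hw : 0 ≤ w) (a : α →₀ ℚ) : 0 ≤ weightedNorm w a :=
  Finset.sum_nonneg fun x _ => mul_nonneg (abs_nonneg _) (hw x)

theorem weightedNorm_add_le (hw : 0 ≤ w) (a b : α →₀ ℚ) :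
    weightedNorm w (a + b) ≤ weightedNorm w a + weightedNorm w b := by
  classical
  rw [weightedNorm_eq_sum_of_support_subset w Finsupp.support_add,
    weightedNorm_eq_sum_of_support_subset w (Finset.subset_union_left (s₂ := b.support)),
    weightedNorm_eq_sum_of_support_subset w (Finset.subset_union_right (s₁ := a.support)),
    ← Finset.sum_add_distrib]
  refine Finset.sum_le_sum fun x _ => ?_
  rw [← add_mul, Finsupp.add_apply, Rat.cast_add]
  exact mul_le_mul_of_nonneg_right (abs_add_le _ _) (hw x)

theorem weightedNorm_mono (h : w ≤ w') (a : α →₀ ℚ) : weightedNorm w a ≤ weightedNorm w' a :=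
  Finset.sum_le_sum fun x _ => mul_le_mul_of_nonneg_left (h x) (abs_nonneg _)

theorem weightedNorm_add_weight (w w' : α → ℝ) (a : α →₀ ℚ) :
    weightedNorm (w + w') a = weightedNorm w a + weightedNorm w' a := by
  simp only [weightedNorm, Pi.add_apply, mul_add, Finsupp.sum_add]

theorem weightedNorm_const_weight (c : ℝ) (a : α →₀ ℚ) :
    weightedNorm (fun _ => c) a = c * weightedNorm 1 a := by
  rw [mul_comm]
  simp only [weightedNorm, Pi.one_apply, mul_one, Finsupp.sum, Finset.sum_mul]

theorem weightedNorm_mapDomain {f : β → α} (hf : Function.Injective f) (w : α → ℝ)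
    (a : β →₀ ℚ) : weightedNorm w (Finsupp.mapDomain f a) = weightedNorm (w ∘ f) a :=
  Finsupp.sum_mapDomain_index_inj hf

theorem weightedNorm_single (w : α → ℝ) (x : α) (c : ℚ) :
    weightedNorm w (Finsupp.single x c) = |(c : ℝ)| * w x :=
  Finsupp.sum_single_index (by simp)

end WeightedNorm

theorem pNormFS_eq_weightedNorm (a : (FreeGroup S × S) →₀ ℚ) :
    pNormFS a = weightedNorm (fun x => 1 + (stdLen x.1 : ℝ) + 1) a :=
  rfl

theorem stdLen_mul_le (g h : FreeGroup S) : stdLen (g * h) ≤ stdLen g + stdLen h :=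
  FreeGroup.norm_mul_le g h

theorem injective_mul_left_fst {G α : Type*} [Group G] (h : G) :
    Function.Injective (fun p : G × α => (h * p.1, p.2)) :=
  (mul_right_injective h).prodMap Function.injective_id

omit [DecidableEq S] in
theorem weightedNorm_one_transl (h : FreeGroup S) (a : (FreeGroup S × S) →₀ ℚ) :
    weightedNorm 1 (transl h a) = weightedNorm 1 a :=
  weightedNorm_mapDomain (injective_mul_left_fst h) 1 a

theorem pNormFS_transl_le (h : FreeGroup S) (a : (FreeGroup S × S) →₀ ℚ) :
    pNormFS (transl h a) ≤ pNormFS a + stdLen h * weightedNorm 1 a := by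
  rw [transl, pNormFS_eq_weightedNorm, pNormFS_eq_weightedNorm,
    weightedNorm_mapDomain (injective_mul_left_fst h), ← weightedNorm_const_weight,
    ← weightedNorm_add_weight]
  refine weightedNorm_mono (fun x => ?_) a
  have : (stdLen (h * x.1) : ℝ) ≤ stdLen h + stdLen x.1 := mod_cast stdLen_mul_le h x.1
  simp only [Function.comp_apply, Pi.add_apply]
  linarith

omit [DecidableEq S] in
theorem weightedNorm_one_psi (ℓ : S × Bool) : weightedNorm 1 (psi ℓ) = 1 := by
  unfold psi
  split <;> rw [weightedNorm_single] <;> norm_num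

theorem pNormFS_psi_le (ℓ : S × Bool) : pNormFS (psi ℓ) ≤ 3 := by
  have hlen : stdLen (FreeGroup.of ℓ.1)⁻¹ = 1 := by
    rw [stdLen, ← FreeGroup.norm, FreeGroup.norm_inv_eq, FreeGroup.norm_of]
  have hone : stdLen (1 : FreeGroup S) = 0 := rfl
  unfold psi
  split <;> rw [pNormFS_eq_weightedNorm, weightedNorm_single] <;> norm_num [hone, hlen]

omit [DecidableEq S] in
theorem weightedNorm_one_s0aux_le (L : List (S × Bool)) :
    weightedNorm 1 (s0aux L) ≤ L.length := by
  induction L with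
  | nil => simp [s0aux, weightedNorm]
  | cons ℓ rest ih =>
    calc weightedNorm 1 (s0aux (ℓ :: rest))
        ≤ weightedNorm 1 (psi ℓ) + weightedNorm 1 (transl (FreeGroup.mk [ℓ]) (s0aux rest)) :=
          weightedNorm_add_le zero_le_one _ _
      _ ≤ 1 + rest.length := by rw [weightedNorm_one_psi, weightedNorm_one_transl]; linarith
      _ = (ℓ :: rest).length := by push_cast [List.length_cons]; ring

theorem pNormFS_s0aux_le (L : List (S × Bool)) :
    pNormFS (s0aux L) ≤ L.length * (L.length + 2) := by
  induction L with
  | nil => simp [s0aux, pNormFS]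
  | cons ℓ rest ih =>
    calc pNormFS (s0aux (ℓ :: rest))
        ≤ pNormFS (psi ℓ) + pNormFS (transl (FreeGroup.mk [ℓ]) (s0aux rest)) :=
          weightedNorm_add_le (fun _ => by positivity) _ _
      _ ≤ 3 + (pNormFS (s0aux rest) + 1 * rest.length) := by
          refine add_le_add (pNormFS_psi_le ℓ) ((pNormFS_transl_le _ _).trans ?_)
          gcongr
          · exact weightedNorm_nonneg zero_le_one _
          · exact_mod_cast FreeGroup.norm_mk_le
          · exact weightedNorm_one_s0aux_le rest
      _ ≤ (ℓ :: rest).length * ((ℓ :: rest).length + 2) := by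
          push_cast [List.length_cons]; nlinarith

theorem pNormFS_s0_le_general (g : FreeGroup S) :
    pNormFS (s0 g) ≤ (1 + 2 * (stdLen g : ℝ)) ^ 2 := by
  have hlen : 0 ≤ (stdLen g : ℝ) := Nat.cast_nonneg _
  calc pNormFS (s0 g) ≤ stdLen g * (stdLen g + 2) := pNormFS_s0aux_le g.toWord
    _ ≤ (1 + 2 * (stdLen g : ℝ)) ^ 2 := by nlinarith

/-- the contraction `s₀` satisfies `|s₀(g)| ≤ (1 + 2 L(g))²`. -/
theorem pNormFS_s0_le [Fintype S] (g : FreeGroup S) :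
    pNormFS (s0 g) ≤ (1 + 2 * (stdLen g : ℝ)) ^ 2 :=
  pNormFS_s0_le_general g

end PBoundedContraction
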